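/- Let ν be a stationary ergodic channel from A^I to itself and f : A^I → B^I a stationary measurable function (f ∘ T_A = T_B ∘ f). Then the cascade channel F = νf (first apply ν, then the deterministic channel induced by f) is a stationary and ergodic channel: for every stationary ergodic source X with distribution μ, the joint process (X, F(X)) is stationary and ergodic. -/

import Mathlib

open MeasureTheory ProbabilityTheory
open scoped ProbabilityTheory

/-!
The joint law of `(X, f(Y))` is the image of the joint law of `(X, Y)` under `id × f`, and
`id × f` intertwines the joint shifts because `f` commutes with the shift. Stationarity and
ergodicity pass to images under such factor maps: the preimage of an invariant set is invariant.
-/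

def seqShift {A : Type*} : (ℕ → A) → (ℕ → A) := fun x i => x (i + 1)

def Stationary {X : Type*} [MeasurableSpace X] (p : Measure X) (S : X → X) : Prop :=
  p.map S = p

def ErgodicInv {X : Type*} [MeasurableSpace X] (p : Measure X) (S : X → X) : Prop :=
  ∀ O : Set X, MeasurableSet O → S ⁻¹' O = O → p O = 0 ∨ p O = 1

theorem measurable_seqShift {A : Type*} [MeasurableSpace A] : Measurable (seqShift (A := A)) :=
  measurable_pi_lambda _ fun i => measurable_pi_apply (i + 1)

section Semiconj

variable {X Y : Type*} [MeasurableSpace X] [MeasurableSpace Y] {p : Measure X} {g : X → Y}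
  {S : X → X} {S' : Y → Y}

theorem Stationary.map_of_semiconj (hp : Stationary p S) (hg : Measurable g)
    (hS : Measurable S) (hS' : Measurable S') (h : Function.Semiconj g S S') :
    Stationary (p.map g) S' := by
  rw [Stationary, Measure.map_map hS' hg, ← h.comp_eq, ← Measure.map_map hg hS, hp]

theorem ErgodicInv.map_of_semiconj (hp : ErgodicInv p S) (hg : Measurable g)
    (h : Function.Semiconj g S S') : ErgodicInv (p.map g) S' := by
  intro O hO hinv
  rw [Measure.map_apply hg hO]
  refine hp _ (hg hO) ?_
  rw [← Set.preimage_comp, h.comp_eq, Set.preimage_comp, hinv]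

end Semiconj

theorem MeasureTheory.Measure.compProd_deterministic_comp {α β γ : Type*} [MeasurableSpace α]
    [MeasurableSpace β] [MeasurableSpace γ] {μ : Measure α} [SFinite μ] {κ : Kernel α β}
    [IsSFiniteKernel κ] {f : β → γ} (hf : Measurable f) :
    μ ⊗ₘ (Kernel.deterministic f hf ∘ₖ κ) = (μ ⊗ₘ κ).map (Prod.map id f) := by
  rw [Kernel.deterministic_comp_eq_map, Measure.compProd_map hf]

/-- The cascade of a stationary ergodic channel `ν` with a stationary deterministic channel
induced by `f` is a stationary ergodic channel. -/
theorem cascade_stationary_ergodic {A B : Type*} [MeasurableSpace A] [MeasurableSpace B]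
    (ν : Kernel (ℕ → A) (ℕ → A)) [IsMarkovKernel ν]
    (hν : ∀ μ : Measure (ℕ → A), IsProbabilityMeasure μ →
      Stationary μ seqShift → ErgodicInv μ seqShift →
        Stationary (μ ⊗ₘ ν) (Prod.map seqShift seqShift) ∧
          ErgodicInv (μ ⊗ₘ ν) (Prod.map seqShift seqShift))
    (f : (ℕ → A) → (ℕ → B)) (hf : Measurable f)
    (hfs : f ∘ seqShift = seqShift ∘ f) :
    ∀ μ : Measure (ℕ → A), IsProbabilityMeasure μ →
      Stationary μ seqShift → ErgodicInv μ seqShift →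
        Stationary (μ ⊗ₘ (Kernel.deterministic f hf ∘ₖ ν)) (Prod.map seqShift seqShift) ∧
          ErgodicInv (μ ⊗ₘ (Kernel.deterministic f hf ∘ₖ ν)) (Prod.map seqShift seqShift) := by
  intro μ hμ hμ_stat hμ_erg
  obtain ⟨hjoint_stat, hjoint_erg⟩ := hν μ hμ hμ_stat hμ_erg
  have hfactor : Function.Semiconj (Prod.map (id : (ℕ → A) → ℕ → A) f)
      (Prod.map seqShift seqShift) (Prod.map seqShift seqShift) :=
    fun x => Prod.ext rfl (congrFun hfs x.2)
  have hmeas : Measurable (Prod.map (id : (ℕ → A) → ℕ → A) f) := measurable_id.prodMap hf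
  rw [Measure.compProd_deterministic_comp hf]
  exact ⟨hjoint_stat.map_of_semiconj hmeas (measurable_seqShift.prodMap measurable_seqShift)
      (measurable_seqShift.prodMap measurable_seqShift) hfactor,
    hjoint_erg.map_of_semiconj hmeas hfactor⟩
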